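/- Let G be a metabelian group, x, y, z ∈ G, and δ a natural number. Then ⁅⁅x,y⁆, z^δ⁆ = ∏_{l=0}^{δ-1} z^{-l} · (⁅⁅z,y⁆, x⁆ · ⁅⁅z,x⁆, y⁆⁻¹) · z^{l} (the factors lie in the abelian subgroup G', so the order of the product is irrelevant). -/

import Mathlib

/-!
In any group `⁅u, z ^ δ⁆ = ∏_{l < δ} z⁻ˡ ⁅u, z⁆ zˡ`, so it remains to show
`⁅⁅x, y⁆, z⁆ = ⁅⁅z, y⁆, x⁆ ⁅⁅z, x⁆, y⁆⁻¹`. When `G'` is abelian, `⁅g, h⁆ ∈ G'` centralizes `G'`, so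
conjugations by `g` and `h` commute on `G'`; hence `⁅g⁻¹ u g, h⁆ = g⁻¹ ⁅u, h⁆ g` and
`⁅u⁻¹, h⁆ = ⁅u, h⁆⁻¹` for `u ∈ G'`. These turn each conjugated factor `y⁻¹ ⁅⁅x, y⁻¹⁆, z⁆ y` of the
Hall–Witt identity into `⁅⁅x, y⁆, z⁆⁻¹`, and the resulting Jacobi identity, together with
`⁅y, z⁆ = ⁅z, y⁆⁻¹`, is the claim.
-/

/-- The commutator ⁅a,b⁆ = a⁻¹b⁻¹ab (paper convention). -/
def pcomm {G : Type*} [Group G] (a b : G) : G := a⁻¹ * b⁻¹ * a * b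

section Group

variable {G : Type*} [Group G]

lemma pcomm_mem_commutator (a b : G) : pcomm a b ∈ commutator G := by
  have h := Subgroup.commutator_mem_commutator (Subgroup.mem_top a⁻¹) (Subgroup.mem_top b⁻¹)
  rw [commutator_def]
  simpa [commutatorElement_def, pcomm, mul_assoc] using h

lemma conj_mem_commutator {u : G} (hu : u ∈ commutator G) (g : G) :
    g⁻¹ * u * g ∈ commutator G :=
  (commutator_def G ▸ Subgroup.commutator_normal ⊤ ⊤ : (commutator G).Normal).conj_mem' u hu g

lemma pcomm_inv (a b : G) : (pcomm a b)⁻¹ = pcomm b a := by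
  unfold pcomm; group

lemma pcomm_pow_right (u z : G) (n : ℕ) :
    pcomm u (z ^ n) = ((List.range n).map fun l => (z ^ l)⁻¹ * pcomm u z * z ^ l).prod := by
  induction n with
  | zero => simp [pcomm]
  | succ n ih =>
    rw [List.range_succ, List.map_append, List.prod_append, ← ih]
    simp only [List.map_cons, List.map_nil, List.prod_cons, List.prod_nil, mul_one, pcomm]
    group

lemma pcomm_hall_witt (x y z : G) :
    (y⁻¹ * pcomm (pcomm x y⁻¹) z * y) * (z⁻¹ * pcomm (pcomm y z⁻¹) x * z) *
      (x⁻¹ * pcomm (pcomm z x⁻¹) y * x) = 1 := by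
  unfold pcomm; group

end Group

section Metabelian

variable {G : Type*} [Group G]
  (hG : ∀ a b : G, a ∈ commutator G → b ∈ commutator G → a * b = b * a)
include hG

lemma conj_conj_comm {u : G} (hu : u ∈ commutator G) (g h : G) :
    h⁻¹ * (g⁻¹ * u * g) * h = g⁻¹ * (h⁻¹ * u * h) * g := by
  -- conjugating by `g`, `h` is conjugating by `h`, `g`, then `⁅g, h⁆`, which is trivial on `G'`
  have hcomm := hG _ _ (conj_mem_commutator hu (h * g)) (pcomm_mem_commutator g h)
  calc h⁻¹ * (g⁻¹ * u * g) * h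
      = (pcomm g h)⁻¹ * ((h * g)⁻¹ * u * (h * g) * pcomm g h) := by unfold pcomm; group
    _ = g⁻¹ * (h⁻¹ * u * h) * g := by rw [hcomm]; group

lemma pcomm_conj_left {u : G} (hu : u ∈ commutator G) (g h : G) :
    pcomm (g⁻¹ * u * g) h = g⁻¹ * pcomm u h * g := by
  calc pcomm (g⁻¹ * u * g) h = g⁻¹ * u⁻¹ * g * (h⁻¹ * (g⁻¹ * u * g) * h) := by unfold pcomm; group
    _ = g⁻¹ * pcomm u h * g := by rw [conj_conj_comm hG hu]; unfold pcomm; group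

lemma pcomm_inv_left {u : G} (hu : u ∈ commutator G) (g : G) :
    pcomm u⁻¹ g = (pcomm u g)⁻¹ := by
  calc pcomm u⁻¹ g = u * (g⁻¹ * u⁻¹ * g) := by unfold pcomm; group
    _ = (g⁻¹ * u⁻¹ * g) * u := hG _ _ hu (conj_mem_commutator (inv_mem hu) g)
    _ = (pcomm u g)⁻¹ := by unfold pcomm; group

lemma conj_pcomm_pcomm_inv_right (x y z : G) :
    y⁻¹ * pcomm (pcomm x y⁻¹) z * y = (pcomm (pcomm x y) z)⁻¹ := by
  have hxy : pcomm x y⁻¹ = y⁻¹⁻¹ * (pcomm x y)⁻¹ * y⁻¹ := by unfold pcomm; group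
  have hmem : (pcomm x y)⁻¹ ∈ commutator G := inv_mem (pcomm_mem_commutator x y)
  rw [hxy, pcomm_conj_left hG hmem, pcomm_inv_left hG (pcomm_mem_commutator x y)]
  group

lemma pcomm_pcomm_eq (x y z : G) :
    pcomm (pcomm x y) z = pcomm (pcomm z y) x * (pcomm (pcomm z x) y)⁻¹ := by
  have hyz : pcomm (pcomm y z) x = (pcomm (pcomm z y) x)⁻¹ := by
    rw [← pcomm_inv z y, pcomm_inv_left hG (pcomm_mem_commutator z y)]
  have hw := pcomm_hall_witt x y z
  rw [conj_pcomm_pcomm_inv_right hG, conj_pcomm_pcomm_inv_right hG,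
    conj_pcomm_pcomm_inv_right hG, hyz, inv_inv, mul_assoc] at hw
  exact inv_mul_eq_one.mp hw

end Metabelian

theorem stmt7 {G : Type*} [Group G]
    (hG : ∀ a b : G, a ∈ commutator G → b ∈ commutator G → a * b = b * a)
    (x y z : G) (δ : ℕ) :
    pcomm (pcomm x y) (z ^ δ) =
      ((List.range δ).map fun l =>
        (z ^ l)⁻¹ * (pcomm (pcomm z y) x * (pcomm (pcomm z x) y)⁻¹) * z ^ l).prod := by
  rw [pcomm_pow_right, pcomm_pcomm_eq hG]
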